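/- arXiv:1906.06067 — 4 statements merged into one kernel-verified Lean document; each statement's English description precedes it below -/
import Mathlib

section
/- Let x ∈ ℝⁿ, r = b − Ax, and let Φ be an n×m real matrix with linearly independent columns. The infimum of f over the affine subspace {x + Φa : a ∈ ℝᵐ} is strictly smaller than f(x) if and only if Φᵀr ≠ 0; in particular, one coordinate vector φ with φᵀr ≠ 0 suffices for a strict decrease of the energy. -/
open Matrix

/-!
Expanding the energy around `x` gives
`f (x + d) = f x + ½ dᵀAd - dᵀr` with `r = b - Ax`. If `Φᵀr = 0`, every direction `d = Φa`
has `dᵀr = 0`, so `f (x + Φa) ≥ f x` by positive semidefiniteness. Conversely, along any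
direction `d` with `dᵀr ≠ 0` the exact line search step `t = dᵀr / dᵀAd` lowers the energy by
`(dᵀr)² / (2 dᵀAd) > 0`; for the subspace take `d = Φ(Φᵀr)`, for which `dᵀr = ‖Φᵀr‖²`.
-/

namespace Matrix

variable {ι κ : Type*} [Fintype ι] [Fintype κ]

noncomputable def quadEnergy (A : Matrix ι ι ℝ) (b y : ι → ℝ) : ℝ :=
  (1 / 2) * (y ⬝ᵥ A *ᵥ y) - y ⬝ᵥ b

theorem quadEnergy_add {A : Matrix ι ι ℝ} (hA : A.IsSymm) (b x d : ι → ℝ) :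
    quadEnergy A b (x + d) =
      quadEnergy A b x + (1 / 2) * (d ⬝ᵥ A *ᵥ d) - d ⬝ᵥ (b - A *ᵥ x) := by
  have hsymm : x ⬝ᵥ A *ᵥ d = d ⬝ᵥ A *ᵥ x := by
    rw [← dotProduct_transpose_mulVec, hA.eq]
  simp only [quadEnergy, mulVec_add, dotProduct_add, add_dotProduct, dotProduct_sub, hsymm]
  ring

theorem quadEnergy_le_add_of_dotProduct_eq_zero {A : Matrix ι ι ℝ} (hA : A.PosSemidef)
    {b x d : ι → ℝ} (hd : d ⬝ᵥ (b - A *ᵥ x) = 0) :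
    quadEnergy A b x ≤ quadEnergy A b (x + d) := by
  have hquad : 0 ≤ d ⬝ᵥ A *ᵥ d := by simpa using hA.dotProduct_mulVec_nonneg d
  rw [quadEnergy_add (isHermitian_iff_isSymm.mp hA.isHermitian), hd]
  linarith

theorem exists_quadEnergy_add_smul_lt {A : Matrix ι ι ℝ} (hA : A.PosDef) {b x d : ι → ℝ}
    (hd : d ⬝ᵥ (b - A *ᵥ x) ≠ 0) : ∃ t : ℝ, quadEnergy A b (x + t • d) < quadEnergy A b x := by
  set c := d ⬝ᵥ (b - A *ᵥ x)
  set q := d ⬝ᵥ A *ᵥ d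
  have hq : 0 < q := by
    have hd0 : d ≠ 0 := by rintro rfl; simp [c] at hd
    simpa using hA.dotProduct_mulVec_pos hd0
  refine ⟨c / q, ?_⟩
  have hdecrease : (1 / 2) * ((c / q) • d ⬝ᵥ A *ᵥ ((c / q) • d)) - (c / q) • d ⬝ᵥ (b - A *ᵥ x)
      = -(c ^ 2 / (2 * q)) := by
    simp only [mulVec_smul, smul_dotProduct, dotProduct_smul, smul_eq_mul]
    field_simp
    ring
  have hgain : 0 < c ^ 2 / (2 * q) := by positivity
  rw [quadEnergy_add (isHermitian_iff_isSymm.mp hA.isHermitian), add_sub_assoc, hdecrease]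
  linarith

theorem exists_quadEnergy_add_mulVec_lt_iff {A : Matrix ι ι ℝ} (hA : A.PosDef) (b x : ι → ℝ)
    (Φ : Matrix ι κ ℝ) :
    (∃ a : κ → ℝ, quadEnergy A b (x + Φ *ᵥ a) < quadEnergy A b x) ↔
      Φᵀ *ᵥ (b - A *ᵥ x) ≠ 0 := by
  set r := b - A *ᵥ x
  constructor
  · rintro ⟨a, ha⟩ hΦr
    have hd : Φ *ᵥ a ⬝ᵥ r = 0 := by
      rw [dotProduct_comm, ← dotProduct_transpose_mulVec, hΦr, dotProduct_zero]
    exact (quadEnergy_le_add_of_dotProduct_eq_zero hA.posSemidef hd).not_gt ha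
  · intro hΦr
    have hd : Φ *ᵥ (Φᵀ *ᵥ r) ⬝ᵥ r ≠ 0 := by
      rw [dotProduct_comm, ← dotProduct_transpose_mulVec]
      exact fun h ↦ hΦr (dotProduct_self_eq_zero.mp h)
    obtain ⟨t, ht⟩ := exists_quadEnergy_add_smul_lt hA hd
    exact ⟨t • Φᵀ *ᵥ r, by rwa [mulVec_smul]⟩

end Matrix

theorem stmt3_general (n m : ℕ) (A : Matrix (Fin n) (Fin n) ℝ) (hA : A.PosDef)
    (b : Fin n → ℝ) (f : (Fin n → ℝ) → ℝ)
    (hf : ∀ y, f y = (1 / 2) * (y ⬝ᵥ A.mulVec y) - y ⬝ᵥ b)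
    (x : Fin n → ℝ) (r : Fin n → ℝ) (hr : r = b - A.mulVec x)
    (Φ : Matrix (Fin n) (Fin m) ℝ) :
    ((∃ a : Fin m → ℝ, f (x + Φ.mulVec a) < f x) ↔ Φᵀ.mulVec r ≠ 0) ∧
    (∀ φ : Fin n → ℝ, φ ⬝ᵥ r ≠ 0 → ∃ t : ℝ, f (x + t • φ) < f x) := by
  obtain rfl : f = quadEnergy A b := funext hf
  subst hr
  exact ⟨exists_quadEnergy_add_mulVec_lt_iff hA b x Φ,
    fun φ hφ ↦ exists_quadEnergy_add_smul_lt hA hφ⟩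

/-- With `r = b − Ax` and `Φ` having linearly independent columns, the infimum of `f`
over the affine subspace `{x + Φa}` is strictly smaller than `f x` iff `Φᵀr ≠ 0`;
in particular a single coordinate vector `φ` with `φᵀr ≠ 0` suffices for a strict
energy decrease. -/
theorem stmt3 (n m : ℕ) (A : Matrix (Fin n) (Fin n) ℝ) (hA : A.PosDef)
    (b : Fin n → ℝ) (f : (Fin n → ℝ) → ℝ)
    (hf : ∀ y, f y = (1 / 2) * (y ⬝ᵥ A.mulVec y) - y ⬝ᵥ b)
    (x : Fin n → ℝ) (r : Fin n → ℝ) (hr : r = b - A.mulVec x)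
    (Φ : Matrix (Fin n) (Fin m) ℝ)
    (hΦ : Function.Injective fun a : Fin m → ℝ => Φ.mulVec a) :
    ((∃ a : Fin m → ℝ, f (x + Φ.mulVec a) < f x) ↔ Φᵀ.mulVec r ≠ 0) ∧
    (∀ φ : Fin n → ℝ, φ ⬝ᵥ r ≠ 0 → ∃ t : ℝ, f (x + t • φ) < f x) :=
  stmt3_general n m A hA b f hf x r hr Φ
end

section
/- Let x ∈ ℝⁿ, r = b − Ax with r ≠ 0, and let S be any linear subspace of ℝⁿ containing r. If x' minimizes f over the affine subspace x + S, then f(x') ≤ f(x) − (rᵀr)²/(2 rᵀAr) < f(x); that is, every subspace-minimization step whose coordinate vectors include the residual decreases the energy at least as much as the steepest descent step. -/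
/-!
Along the residual direction `r = b - A x` the energy is the parabola
`t ↦ f x - t (rᵀr) + t² (rᵀAr) / 2`, whose minimum, attained at `t = rᵀr / rᵀAr`, lies
`(rᵀr)² / (2 rᵀAr)` below `f x`. Since `r ∈ S`, this steepest descent point is a competitor
in `x + S`, so the minimizer over `x + S` does at least as well.
-/

open Matrix

variable {ι : Type*} [Fintype ι]

theorem Matrix.IsSymm.dotProduct_mulVec_comm {R : Type*} [CommSemiring R] {A : Matrix ι ι R}
    (hA : A.IsSymm) (u v : ι → R) : u ⬝ᵥ A *ᵥ v = v ⬝ᵥ A *ᵥ u := by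
  rw [dotProduct_mulVec, dotProduct_comm, ← mulVec_transpose, hA.eq]

noncomputable def quadraticEnergy (A : Matrix ι ι ℝ) (b y : ι → ℝ) : ℝ :=
  (1 / 2) * (y ⬝ᵥ A *ᵥ y) - y ⬝ᵥ b

theorem quadraticEnergy_add {A : Matrix ι ι ℝ} (hA : A.IsSymm) (b x s : ι → ℝ) :
    quadraticEnergy A b (x + s) =
      quadraticEnergy A b x - s ⬝ᵥ (b - A *ᵥ x) + (1 / 2) * (s ⬝ᵥ A *ᵥ s) := by
  have hcross := hA.dotProduct_mulVec_comm x s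
  simp only [quadraticEnergy, mulVec_add, dotProduct_add, add_dotProduct, dotProduct_sub]
  linarith

theorem quadraticEnergy_add_steepestDescentStep {A : Matrix ι ι ℝ} (hA : A.IsSymm)
    {b x r : ι → ℝ} (hr : r = b - A *ᵥ x) (hcurv : r ⬝ᵥ A *ᵥ r ≠ 0) :
    quadraticEnergy A b (x + ((r ⬝ᵥ r) / (r ⬝ᵥ A *ᵥ r)) • r) =
      quadraticEnergy A b x - (r ⬝ᵥ r) ^ 2 / (2 * (r ⬝ᵥ A *ᵥ r)) := by
  rw [quadraticEnergy_add hA, ← hr]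
  simp only [mulVec_smul, smul_dotProduct, dotProduct_smul, smul_eq_mul]
  field_simp [hcurv]
  ring

theorem steepestDescent_decrease_pos {A : Matrix ι ι ℝ} (hA : A.PosDef) {r : ι → ℝ}
    (hr : r ≠ 0) : 0 < (r ⬝ᵥ r) ^ 2 / (2 * (r ⬝ᵥ A *ᵥ r)) := by
  have hrr : 0 < r ⬝ᵥ r :=
    lt_of_le_of_ne (Finset.sum_nonneg fun i _ => mul_self_nonneg (r i))
      (Ne.symm (dotProduct_self_eq_zero.not.mpr hr))
  have hrAr : 0 < r ⬝ᵥ A *ᵥ r := by simpa using hA.dotProduct_mulVec_pos hr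
  positivity

theorem stmt8_general (n : ℕ) (A : Matrix (Fin n) (Fin n) ℝ) (hA : A.PosDef)
    (b : Fin n → ℝ) (f : (Fin n → ℝ) → ℝ)
    (hf : ∀ y, f y = (1 / 2) * (y ⬝ᵥ A.mulVec y) - y ⬝ᵥ b)
    (x : Fin n → ℝ) (r : Fin n → ℝ) (hr : r = b - A.mulVec x) (hr0 : r ≠ 0)
    (S : Submodule ℝ (Fin n → ℝ)) (hrS : r ∈ S)
    (x' : Fin n → ℝ)
    (hmin : ∀ s ∈ S, f x' ≤ f (x + s)) :
    f x' ≤ f x - (r ⬝ᵥ r) ^ 2 / (2 * (r ⬝ᵥ A.mulVec r)) ∧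
    f x - (r ⬝ᵥ r) ^ 2 / (2 * (r ⬝ᵥ A.mulVec r)) < f x := by
  obtain rfl : f = quadraticEnergy A b := funext hf
  have hcurv : 0 < r ⬝ᵥ A *ᵥ r := by simpa using hA.dotProduct_mulVec_pos hr0
  refine ⟨?_, sub_lt_self _ (steepestDescent_decrease_pos hA hr0)⟩
  rw [← quadraticEnergy_add_steepestDescentStep
    (isHermitian_iff_isSymm.mp hA.isHermitian) hr hcurv.ne']
  exact hmin _ (S.smul_mem _ hrS)

/-- If the subspace `S` contains the (nonzero) residual `r = b − Ax`, then the
minimizer `x'` of `f` over `x + S` satisfies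
`f x' ≤ f x − (rᵀr)²/(2 rᵀAr) < f x`. -/
theorem stmt8 (n : ℕ) (A : Matrix (Fin n) (Fin n) ℝ) (hA : A.PosDef)
    (b : Fin n → ℝ) (f : (Fin n → ℝ) → ℝ)
    (hf : ∀ y, f y = (1 / 2) * (y ⬝ᵥ A.mulVec y) - y ⬝ᵥ b)
    (x : Fin n → ℝ) (r : Fin n → ℝ) (hr : r = b - A.mulVec x) (hr0 : r ≠ 0)
    (S : Submodule ℝ (Fin n → ℝ)) (hrS : r ∈ S)
    (x' : Fin n → ℝ) (hx' : ∃ s ∈ S, x' = x + s)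
    (hmin : ∀ s ∈ S, f x' ≤ f (x + s)) :
    f x' ≤ f x - (r ⬝ᵥ r) ^ 2 / (2 * (r ⬝ᵥ A.mulVec r)) ∧
    f x - (r ⬝ᵥ r) ^ 2 / (2 * (r ⬝ᵥ A.mulVec r)) < f x :=
  stmt8_general n A hA b f hf x r hr hr0 S hrS x' hmin
end

section
/- Let x₀ ∈ ℝⁿ, r₀ = b − Ax₀, and let m be the number of distinct active eigenvalues of r₀ (distinct eigenvalues λⱼ of A such that r₀ has nonzero component along the corresponding orthonormal eigenvector). Then the unique minimizer of f over the affine Krylov subspace x₀ + span{r₀, Ar₀, …, A^{m−1}r₀} is exactly x* = A⁻¹b; hence any method that minimizes f over this Krylov subspace (in exact arithmetic) obtains the exact solution after m steps. -/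
/-!
Write `r₀ = ∑ⱼ cⱼ vⱼ` in the eigenbasis and let `S` be the set of active eigenvalues, so `|S| = m`.
The Lagrange interpolant `p` of `t ↦ t⁻¹` on `S` has degree `< m`, and `X * p - 1` vanishes on `S`,
hence kills `r₀`; so `e = p(A) r₀` lies in the Krylov space and solves `A e = r₀`, i.e.
`x₀ + e = A⁻¹ b`. Minimality is the identity `f x = f x⋆ + ½ (x - x⋆)ᵀ A (x - x⋆)`.
-/

open Matrix Polynomial

namespace Matrix

variable {ι : Type*} [Fintype ι]

theorem PosDef.energy_lt_of_mulVec_eq {A : Matrix ι ι ℝ} (hA : A.PosDef) {b x y : ι → ℝ}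
    (hy : A *ᵥ y = b) (hne : x ≠ y) :
    1 / 2 * (y ⬝ᵥ A *ᵥ y) - y ⬝ᵥ b < 1 / 2 * (x ⬝ᵥ A *ᵥ x) - x ⬝ᵥ b := by
  have hpos : 0 < (x - y) ⬝ᵥ A *ᵥ (x - y) := by
    simpa using hA.dotProduct_mulVec_pos (sub_ne_zero.mpr hne)
  have hsym : x ⬝ᵥ A *ᵥ y = y ⬝ᵥ A *ᵥ x := by
    rw [dotProduct_mulVec, ← mulVec_transpose, ← conjTranspose_eq_transpose_of_trivial, hA.1,
      dotProduct_comm]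
  subst hy
  simp only [mulVec_sub, sub_dotProduct, dotProduct_sub] at hpos
  linarith

variable [DecidableEq ι]

theorem sum_dotProduct_smul_of_orthonormal {R : Type*} [CommRing R] {v : ι → ι → R}
    (horth : ∀ i j, v i ⬝ᵥ v j = if i = j then (1 : R) else 0) (x : ι → R) :
    ∑ j, (x ⬝ᵥ v j) • v j = x := by
  have hV : of v * (of v)ᵀ = 1 := by
    ext i j
    simpa [mul_apply, one_apply, dotProduct] using horth i j
  calc ∑ j, (x ⬝ᵥ v j) • v j = (of v)ᵀ *ᵥ (of v *ᵥ x) := by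
        rw [mulVec_transpose, vecMul_eq_sum]
        exact Finset.sum_congr rfl fun j _ => by rw [mulVec, dotProduct_comm]; rfl
    _ = x := by rw [mulVec_mulVec, mul_eq_one_comm.mp hV, one_mulVec]

theorem aeval_mulVec_of_mulVec_eq_smul {R : Type*} [CommRing R] {A : Matrix ι ι R}
    {v : ι → R} {μ : R} (h : A *ᵥ v = μ • v) (q : R[X]) :
    aeval A q *ᵥ v = q.eval μ • v := by
  induction q using Polynomial.induction_on' with
  | add p q hp hq => simp [add_mulVec, hp, hq, add_smul]
  | monomial k a =>
    have hpow : (A ^ k) *ᵥ v = μ ^ k • v := by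
      induction k with
      | zero => simp
      | succ k ih => rw [pow_succ', ← mulVec_mulVec, ih, mulVec_smul, h, smul_smul, ← pow_succ]
    rw [aeval_monomial, eval_monomial, ← mulVec_mulVec, hpow, Algebra.algebraMap_eq_smul_one,
      smul_mulVec, one_mulVec, smul_smul]

theorem aeval_mulVec_eq_zero_of_eval_eq_zero {R : Type*} [CommRing R] {A : Matrix ι ι R}
    {v : ι → ι → R} {μ : ι → R} (horth : ∀ i j, v i ⬝ᵥ v j = if i = j then (1 : R) else 0)
    (heig : ∀ j, A *ᵥ v j = μ j • v j) {r : ι → R} {q : R[X]}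
    (hq : ∀ j, r ⬝ᵥ v j ≠ 0 → q.eval (μ j) = 0) :
    aeval A q *ᵥ r = 0 := by
  rw [← sum_dotProduct_smul_of_orthonormal horth r, mulVec_sum]
  refine Finset.sum_eq_zero fun j _ => ?_
  rw [mulVec_smul, aeval_mulVec_of_mulVec_eq_smul (heig j)]
  by_cases hj : r ⬝ᵥ v j = 0
  · simp [hj]
  · simp [hq j hj]

theorem aeval_mulVec_mem_span_pow_mulVec {R : Type*} [CommRing R] (A : Matrix ι ι R)
    (r : ι → R) {m : ℕ} {p : R[X]} (hp : p.degree < m) :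
    aeval A p *ᵥ r ∈ Submodule.span R (Set.range fun k : Fin m => (A ^ (k : ℕ)) *ᵥ r) := by
  classical
  rw [← mem_degreeLT, degreeLT_eq_span_X_pow] at hp
  induction hp using Submodule.span_induction with
  | mem q hq =>
    obtain ⟨k, hk, rfl⟩ := Finset.mem_image.mp hq
    simpa using Submodule.subset_span (Set.mem_range_self (⟨k, Finset.mem_range.mp hk⟩ : Fin m))
  | zero => simp
  | add p q _ _ hp hq => simpa [add_mulVec] using add_mem hp hq
  | smul a p _ hp => simpa [smul_mulVec] using Submodule.smul_mem _ a hp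

theorem eigenvalue_ne_zero_of_isUnit {R : Type*} [CommRing R] {A : Matrix ι ι R}
    (hA : IsUnit A) {v : ι → R} {μ : R} (hv : v ≠ 0) (h : A *ᵥ v = μ • v) : μ ≠ 0 := by
  rintro rfl
  exact hv (mulVec_injective_of_isUnit hA (by simpa using h))

theorem exists_mem_span_pow_mulVec_mulVec_eq {K : Type*} [Field K] {A : Matrix ι ι K}
    (hA : IsUnit A) {v : ι → ι → K} {μ : ι → K}
    (horth : ∀ i j, v i ⬝ᵥ v j = if i = j then (1 : K) else 0)
    (heig : ∀ j, A *ᵥ v j = μ j • v j) (r : ι → K) :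
    ∃ e ∈ Submodule.span K (Set.range fun k : Fin (μ '' {j | r ⬝ᵥ v j ≠ 0}).ncard =>
      (A ^ (k : ℕ)) *ᵥ r), A *ᵥ e = r := by
  classical
  set S := (μ '' {j | r ⬝ᵥ v j ≠ 0}).toFinset
  have hS : ∀ j, r ⬝ᵥ v j ≠ 0 → μ j ∈ S := fun j hj => Set.mem_toFinset.mpr ⟨j, hj, rfl⟩
  have hμ : ∀ j, μ j ≠ 0 := fun j => eigenvalue_ne_zero_of_isUnit hA
    (fun h => by simpa [h] using horth j j) (heig j)
  set p := Lagrange.interpolate S id fun t => t⁻¹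
  refine ⟨aeval A p *ᵥ r, aeval_mulVec_mem_span_pow_mulVec A r ?_, ?_⟩
  · rw [Set.ncard_eq_toFinset_card']
    exact Lagrange.degree_interpolate_lt _ (Set.injOn_id _)
  · have hker : aeval A (X * p - 1) *ᵥ r = 0 :=
      aeval_mulVec_eq_zero_of_eval_eq_zero horth heig fun j hj => by
        have hpj : p.eval (μ j) = (μ j)⁻¹ :=
          Lagrange.eval_interpolate_at_node _ (Set.injOn_id _) (hS j hj)
        simp [hpj, hμ j]
    simpa [sub_mulVec, mulVec_mulVec, sub_eq_zero] using hker

end Matrix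

/-- Finite termination of energy minimization over Krylov subspaces: if `m` is the
number of distinct active eigenvalues of the initial residual `r₀ = b − Ax₀`, then
the unique minimizer of `f` over the affine Krylov subspace
`x₀ + span{r₀, Ar₀, …, A^{m−1}r₀}` is exactly `x⋆ = A⁻¹b`. -/
theorem stmt13 (n : ℕ) (A : Matrix (Fin n) (Fin n) ℝ) (hA : A.PosDef)
    (b : Fin n → ℝ) (f : (Fin n → ℝ) → ℝ)
    (hf : ∀ y, f y = (1 / 2) * (y ⬝ᵥ A.mulVec y) - y ⬝ᵥ b)
    (v : Fin n → Fin n → ℝ) (μ : Fin n → ℝ)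
    (horth : ∀ i j : Fin n, v i ⬝ᵥ v j = if i = j then (1 : ℝ) else 0)
    (heig : ∀ j : Fin n, A.mulVec (v j) = μ j • v j)
    (x₀ : Fin n → ℝ) (r₀ : Fin n → ℝ) (hr₀ : r₀ = b - A.mulVec x₀)
    (m : ℕ) (hm : m = (μ '' {j : Fin n | r₀ ⬝ᵥ v j ≠ 0}).ncard)
    (K : Submodule ℝ (Fin n → ℝ))
    (hK : K = Submodule.span ℝ (Set.range fun k : Fin m => (A ^ (k : ℕ)).mulVec r₀)) :
    (∃ s ∈ K, A⁻¹.mulVec b = x₀ + s) ∧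
    (∀ s ∈ K, x₀ + s ≠ A⁻¹.mulVec b → f (A⁻¹.mulVec b) < f (x₀ + s)) := by
  have hsol : A *ᵥ A⁻¹ *ᵥ b = b := by
    rw [mulVec_mulVec, mul_nonsing_inv _ (isUnit_iff_isUnit_det A |>.mp hA.isUnit), one_mulVec]
  obtain ⟨e, heK, hAe⟩ := exists_mem_span_pow_mulVec_mulVec_eq hA.isUnit horth heig r₀
  subst hK hm
  refine ⟨⟨e, heK, mulVec_injective_of_isUnit hA.isUnit ?_⟩, fun s _ hne => ?_⟩
  · rw [hsol, mulVec_add, hAe, hr₀, add_sub_cancel]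
  · rw [hf, hf]
    exact hA.energy_lt_of_mulVec_eq hsol hne
end

section
/- Define the conjugate gradient iteration: x₀ ∈ ℝⁿ, r₀ = b − Ax₀, p₀ = r₀, and for k ≥ 0 with rₖ ≠ 0: αₖ = (rₖᵀrₖ)/(pₖᵀApₖ), x_{k+1} = xₖ + αₖpₖ, r_{k+1} = rₖ − αₖApₖ, βₖ = (r_{k+1}ᵀr_{k+1})/(rₖᵀrₖ), p_{k+1} = r_{k+1} + βₖpₖ. Then for every k ≥ 1 with r₀, …, r_{k−1} all nonzero, the iterate xₖ is the unique minimizer of f over the affine Krylov subspace x₀ + span{r₀, Ar₀, …, A^{k−1}r₀}. -/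
open Matrix

/-!
The CG residuals are orthogonal to all earlier search directions, and the directions are
mutually `A`-conjugate; both facts are propagated together by strong induction. The Krylov
space `K_k` lies in the span of `p₀, …, p_{k-1}` (because `A pⱼ` is a multiple of
`rⱼ - r_{j+1}`), so `r_k = b - A x_k`, the negative gradient of `f` at `x_k`, is orthogonal to
`K_k`. As `x_k - x₀ ∈ K_k` and `f (x_k + d) = f x_k + ½ dᵀAd - dᵀr_k`, every `d ∈ K_k \ {0}`
strictly increases the energy.
-/

section SpanFirst

variable (R : Type*) {M : Type*} [Semiring R] [AddCommMonoid M] [Module R M]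

def spanFirst (v : ℕ → M) (k : ℕ) : Submodule R M :=
  Submodule.span R (Set.range fun i : Fin k => v i)

variable {R} {v : ℕ → M} {k l : ℕ}

theorem spanFirst_le_iff {S : Submodule R M} : spanFirst R v k ≤ S ↔ ∀ i < k, v i ∈ S := by
  simp [spanFirst, Submodule.span_le, Set.range_subset_iff, Fin.forall_iff]

theorem mem_spanFirst {i : ℕ} (h : i < k) : v i ∈ spanFirst R v k :=
  spanFirst_le_iff.1 le_rfl i h

theorem spanFirst_mono (h : k ≤ l) : spanFirst R v k ≤ spanFirst R v l :=
  spanFirst_le_iff.2 fun _ hi => mem_spanFirst (by omega)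

end SpanFirst

theorem dotProduct_eq_zero_of_mem_spanFirst {ι R : Type*} [Fintype ι] [CommRing R]
    {u w : ι → R} {v : ℕ → ι → R} {k : ℕ}
    (h : ∀ i < k, u ⬝ᵥ v i = 0) (hw : w ∈ spanFirst R v k) : u ⬝ᵥ w = 0 :=
  (spanFirst_le_iff (S := LinearMap.ker (dotProductBilin R R u))).2 h hw

theorem Matrix.IsSymm.mulVec_dotProduct {ι R : Type*} [Fintype ι] [CommSemiring R]
    {A : Matrix ι ι R} (hA : A.IsSymm) (u v : ι → R) : A *ᵥ u ⬝ᵥ v = u ⬝ᵥ A *ᵥ v := by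
  rw [dotProduct_comm, dotProduct_mulVec, ← mulVec_transpose, hA.eq, dotProduct_comm]

section Krylov

variable {ι R : Type*} [Fintype ι] [DecidableEq ι] [CommRing R]

def krylov (A : Matrix ι ι R) (v : ι → R) (k : ℕ) : Submodule R (ι → R) :=
  spanFirst R (fun i => (A ^ i) *ᵥ v) k

theorem mulVec_mem_krylov_succ {A : Matrix ι ι R} {v u : ι → R} {k : ℕ}
    (hu : u ∈ krylov A v k) : A *ᵥ u ∈ krylov A v (k + 1) := by
  refine (spanFirst_le_iff (S := (krylov A v (k + 1)).comap A.mulVecLin)).2 (fun i hi => ?_) hu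
  rw [Submodule.mem_comap, mulVecLin_apply, mulVec_mulVec, ← pow_succ']
  exact mem_spanFirst (by omega)

end Krylov

section Energy

variable {ι : Type*} [Fintype ι] {A : Matrix ι ι ℝ}

noncomputable def energy (A : Matrix ι ι ℝ) (b y : ι → ℝ) : ℝ :=
  (1 / 2) * (y ⬝ᵥ A *ᵥ y) - y ⬝ᵥ b

theorem energy_add (hA : A.IsSymm) (b x d : ι → ℝ) :
    energy A b (x + d) = energy A b x + (1 / 2) * (d ⬝ᵥ A *ᵥ d) - d ⬝ᵥ (b - A *ᵥ x) := by
  have hcross : x ⬝ᵥ A *ᵥ d = d ⬝ᵥ A *ᵥ x := by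
    rw [← hA.mulVec_dotProduct, dotProduct_comm]
  simp only [energy, mulVec_add, add_dotProduct, dotProduct_add, dotProduct_sub, hcross]
  ring

theorem energy_lt_energy_add (hA : A.PosDef) {b x d : ι → ℝ} (hd : d ≠ 0)
    (horth : d ⬝ᵥ (b - A *ᵥ x) = 0) : energy A b x < energy A b (x + d) := by
  have hpos : 0 < d ⬝ᵥ A *ᵥ d := by simpa using hA.dotProduct_mulVec_pos hd
  rw [energy_add (isHermitian_iff_isSymm.1 hA.isHermitian), horth]
  linarith

end Energy

structure IsCGSequence {ι : Type*} [Fintype ι] (A : Matrix ι ι ℝ) (b : ι → ℝ)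
    (x r p : ℕ → ι → ℝ) : Prop where
  r_zero : r 0 = b - A *ᵥ x 0
  p_zero : p 0 = r 0
  x_succ : ∀ k, r k ≠ 0 → x (k + 1) = x k + ((r k ⬝ᵥ r k) / (p k ⬝ᵥ A *ᵥ p k)) • p k
  r_succ : ∀ k, r k ≠ 0 → r (k + 1) = r k - ((r k ⬝ᵥ r k) / (p k ⬝ᵥ A *ᵥ p k)) • A *ᵥ p k
  p_succ : ∀ k, r k ≠ 0 → p (k + 1) = r (k + 1) + ((r (k + 1) ⬝ᵥ r (k + 1)) / (r k ⬝ᵥ r k)) • p k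

namespace IsCGSequence

variable {ι : Type*} [Fintype ι] {A : Matrix ι ι ℝ} {b : ι → ℝ} {x r p : ℕ → ι → ℝ} {k : ℕ}

theorem residual_eq (cg : IsCGSequence A b x r p) :
    ∀ {k}, (∀ i < k, r i ≠ 0) → r k = b - A *ᵥ x k
  | 0, _ => cg.r_zero
  | k + 1, hk => by
    have hr := hk k (by omega)
    rw [cg.r_succ k hr, cg.x_succ k hr, cg.residual_eq fun i hi => hk i (by omega), mulVec_add,
      mulVec_smul]
    abel

theorem residual_mem_spanFirst (cg : IsCGSequence A b x r p) (hk : ∀ i < k, r i ≠ 0) :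
    r k ∈ spanFirst ℝ p (k + 1) := by
  cases k with
  | zero => exact cg.p_zero ▸ mem_spanFirst (by omega)
  | succ k =>
    rw [show r (k + 1) = p (k + 1) - ((r (k + 1) ⬝ᵥ r (k + 1)) / (r k ⬝ᵥ r k)) • p k by
      rw [cg.p_succ k (hk k (by omega))]; abel]
    exact sub_mem (mem_spanFirst (by omega)) (Submodule.smul_mem _ _ (mem_spanFirst (by omega)))

theorem residual_dotProduct_direction (cg : IsCGSequence A b x r p) (hk : ∀ i < k, r i ≠ 0)
    (hrp : ∀ i < k, r k ⬝ᵥ p i = 0) : r k ⬝ᵥ p k = r k ⬝ᵥ r k := by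
  cases k with
  | zero => rw [cg.p_zero]
  | succ k =>
    rw [cg.p_succ k (hk k (by omega)), dotProduct_add, dotProduct_smul, hrp k (by omega),
      smul_zero, add_zero]

theorem direction_pos (cg : IsCGSequence A b x r p) (hA : A.PosDef) (hk : ∀ i < k, r i ≠ 0)
    (hrp : ∀ i < k, r k ⬝ᵥ p i = 0) (hr : r k ≠ 0) : 0 < p k ⬝ᵥ A *ᵥ p k := by
  have hp : p k ≠ 0 := by
    rintro hp
    have := cg.residual_dotProduct_direction hk hrp
    rw [hp, dotProduct_zero, eq_comm, dotProduct_self_eq_zero] at this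
    exact hr this
  simpa using hA.dotProduct_mulVec_pos hp

theorem mulVec_direction_eq (cg : IsCGSequence A b x r p) (hr : r k ≠ 0)
    (hpos : 0 < p k ⬝ᵥ A *ᵥ p k) :
    A *ᵥ p k = ((p k ⬝ᵥ A *ᵥ p k) / (r k ⬝ᵥ r k)) • (r k - r (k + 1)) := by
  have hrr : r k ⬝ᵥ r k ≠ 0 := fun h => hr (dotProduct_self_eq_zero.1 h)
  rw [cg.r_succ k hr, sub_sub_cancel, smul_smul, div_mul_div_comm, mul_comm (p k ⬝ᵥ _),
    div_self (mul_ne_zero hrr hpos.ne'), one_smul]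

theorem dotProduct_mulVec_direction (cg : IsCGSequence A b x r p) (hr : r k ≠ 0)
    (hpos : 0 < p k ⬝ᵥ A *ᵥ p k) (w : ι → ℝ) :
    w ⬝ᵥ A *ᵥ p k = (p k ⬝ᵥ A *ᵥ p k) / (r k ⬝ᵥ r k) * (w ⬝ᵥ r k - w ⬝ᵥ r (k + 1)) := by
  conv_lhs => rw [cg.mulVec_direction_eq hr hpos, dotProduct_smul, dotProduct_sub, smul_eq_mul]

theorem residual_succ_orthogonal (cg : IsCGSequence A b x r p) (hA : A.IsSymm) (hr : r k ≠ 0)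
    (hpos : 0 < p k ⬝ᵥ A *ᵥ p k) (hrp : ∀ i < k, r k ⬝ᵥ p i = 0)
    (hpp : ∀ i < k, p k ⬝ᵥ A *ᵥ p i = 0) (hrp_self : r k ⬝ᵥ p k = r k ⬝ᵥ r k) :
    ∀ i < k + 1, r (k + 1) ⬝ᵥ p i = 0 := by
  intro i hi
  rw [cg.r_succ k hr, sub_dotProduct, smul_dotProduct, hA.mulVec_dotProduct, smul_eq_mul]
  rcases Nat.lt_succ_iff_lt_or_eq.1 hi with hik | rfl
  · rw [hrp i hik, hpp i hik, mul_zero, sub_zero]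
  · rw [hrp_self, div_mul_cancel₀ _ hpos.ne', sub_self]

theorem direction_succ_conjugate (cg : IsCGSequence A b x r p) (hr : ∀ i < k + 1, r i ≠ 0)
    (hpos : ∀ i < k + 1, 0 < p i ⬝ᵥ A *ᵥ p i) (hrr : ∀ i < k + 1, r (k + 1) ⬝ᵥ r i = 0)
    (hpp : ∀ i < k, p k ⬝ᵥ A *ᵥ p i = 0) :
    ∀ i < k + 1, p (k + 1) ⬝ᵥ A *ᵥ p i = 0 := by
  intro i hi
  rw [cg.p_succ k (hr k (by omega)), add_dotProduct, smul_dotProduct,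
    cg.dotProduct_mulVec_direction (hr i hi) (hpos i hi) (r (k + 1)), hrr i hi, smul_eq_mul]
  rcases Nat.lt_succ_iff_lt_or_eq.1 hi with hik | rfl
  · rw [hpp i hik, hrr (i + 1) (by omega)]
    ring
  · ring

theorem orthogonal_and_conjugate (cg : IsCGSequence A b x r p) (hA : A.PosDef) :
    ∀ k, (∀ i < k, r i ≠ 0) →
      (∀ i < k, r k ⬝ᵥ p i = 0) ∧ ∀ i < k, p k ⬝ᵥ A *ᵥ p i = 0 := by
  intro k
  induction k using Nat.strong_induction_on with
  | _ k ih =>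
  intro hk
  cases k with
  | zero => simp
  | succ k =>
    have hk' : ∀ i < k, r i ≠ 0 := fun i hi => hk i (by omega)
    obtain ⟨hrp, hpp⟩ := ih k (by omega) hk'
    have hpos : ∀ i < k + 1, 0 < p i ⬝ᵥ A *ᵥ p i := fun i hi =>
      cg.direction_pos hA (fun j hj => hk j (by omega))
        (ih i hi fun j hj => hk j (by omega)).1 (hk i hi)
    have hrp' := cg.residual_succ_orthogonal (isHermitian_iff_isSymm.1 hA.isHermitian)
      (hk k (by omega)) (hpos k (by omega)) hrp hpp (cg.residual_dotProduct_direction hk' hrp)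
    have hrr : ∀ i < k + 1, r (k + 1) ⬝ᵥ r i = 0 := fun i hi =>
      dotProduct_eq_zero_of_mem_spanFirst hrp'
        (spanFirst_mono (by omega) (cg.residual_mem_spanFirst fun j hj => hk j (by omega)))
    exact ⟨hrp', cg.direction_succ_conjugate hk hpos hrr hpp⟩

theorem mulVec_direction_mem_spanFirst (cg : IsCGSequence A b x r p) (hA : A.PosDef)
    (hk : ∀ i < k + 1, r i ≠ 0) : A *ᵥ p k ∈ spanFirst ℝ p (k + 2) := by
  have hk' : ∀ i < k, r i ≠ 0 := fun i hi => hk i (by omega)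
  rw [cg.mulVec_direction_eq (hk k (by omega))
    (cg.direction_pos hA hk' (cg.orthogonal_and_conjugate hA k hk').1 (hk k (by omega)))]
  exact Submodule.smul_mem _ _
    (sub_mem (spanFirst_mono (by omega) (cg.residual_mem_spanFirst hk'))
      (cg.residual_mem_spanFirst hk))

theorem pow_mulVec_mem_spanFirst [DecidableEq ι] (cg : IsCGSequence A b x r p) (hA : A.PosDef) :
    ∀ {k}, (∀ i < k, r i ≠ 0) → (A ^ k) *ᵥ r 0 ∈ spanFirst ℝ p (k + 1)
  | 0, _ => by
    rw [pow_zero, one_mulVec, ← cg.p_zero]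
    exact mem_spanFirst (by omega)
  | k + 1, hk => by
    rw [pow_succ', ← mulVec_mulVec]
    refine (spanFirst_le_iff (S := (spanFirst ℝ p (k + 2)).comap A.mulVecLin)).2 (fun i hi => ?_)
      (cg.pow_mulVec_mem_spanFirst hA fun i hi => hk i (by omega))
    exact spanFirst_mono (by omega)
      (cg.mulVec_direction_mem_spanFirst hA fun j hj => hk j (by omega))

theorem residual_orthogonal_krylov [DecidableEq ι] (cg : IsCGSequence A b x r p) (hA : A.PosDef)
    (hk : ∀ i < k, r i ≠ 0) {v : ι → ℝ} (hv : v ∈ krylov A (r 0) k) : r k ⬝ᵥ v = 0 := by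
  have hKP : krylov A (r 0) k ≤ spanFirst ℝ p k := spanFirst_le_iff.2 fun i hi =>
    spanFirst_mono (by omega) (cg.pow_mulVec_mem_spanFirst hA fun j hj => hk j (by omega))
  exact dotProduct_eq_zero_of_mem_spanFirst (cg.orthogonal_and_conjugate hA k hk).1 (hKP hv)

theorem mem_krylov [DecidableEq ι] (cg : IsCGSequence A b x r p) :
    ∀ {k}, (∀ i < k, r i ≠ 0) → r k ∈ krylov A (r 0) (k + 1) ∧ p k ∈ krylov A (r 0) (k + 1)
  | 0, _ => by
    have h : (A ^ 0) *ᵥ r 0 ∈ krylov A (r 0) 1 := mem_spanFirst zero_lt_one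
    rw [pow_zero, one_mulVec] at h
    exact ⟨h, cg.p_zero ▸ h⟩
  | k + 1, hk => by
    have hr := hk k (by omega)
    obtain ⟨hrk, hpk⟩ := cg.mem_krylov (k := k) fun i hi => hk i (by omega)
    have hr' : r (k + 1) ∈ krylov A (r 0) (k + 2) := by
      rw [cg.r_succ k hr]
      exact sub_mem (spanFirst_mono (by omega) hrk)
        (Submodule.smul_mem _ _ (mulVec_mem_krylov_succ hpk))
    refine ⟨hr', ?_⟩
    rw [cg.p_succ k hr]
    exact add_mem hr' (Submodule.smul_mem _ _ (spanFirst_mono (by omega) hpk))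

theorem iterate_sub_mem_krylov [DecidableEq ι] (cg : IsCGSequence A b x r p) :
    ∀ {k}, (∀ i < k, r i ≠ 0) → x k - x 0 ∈ krylov A (r 0) k
  | 0, _ => by
    rw [sub_self]
    exact zero_mem _
  | k + 1, hk => by
    rw [cg.x_succ k (hk k (by omega)), add_sub_right_comm]
    exact add_mem
      (spanFirst_mono (by omega) (cg.iterate_sub_mem_krylov fun i hi => hk i (by omega)))
      (Submodule.smul_mem _ _ (cg.mem_krylov fun i hi => hk i (by omega)).2)

end IsCGSequence

/-- CG optimality over Krylov subspaces: for `k ≥ 1` (with residuals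
`r₀, …, r_{k−1}` nonzero) the CG iterate `x_k` is the unique minimizer of the energy
`f` over the affine Krylov subspace `x₀ + span{r₀, Ar₀, …, A^{k−1}r₀}`. -/
theorem stmt16 (n : ℕ) (A : Matrix (Fin n) (Fin n) ℝ) (hA : A.PosDef)
    (b : Fin n → ℝ) (f : (Fin n → ℝ) → ℝ)
    (hf : ∀ y, f y = (1 / 2) * (y ⬝ᵥ A.mulVec y) - y ⬝ᵥ b)
    (x r p : ℕ → Fin n → ℝ)
    (hr0 : r 0 = b - A.mulVec (x 0)) (hp0 : p 0 = r 0)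
    (hxrec : ∀ k : ℕ, r k ≠ 0 →
      x (k + 1) = x k + ((r k ⬝ᵥ r k) / (p k ⬝ᵥ A.mulVec (p k))) • p k)
    (hrrec : ∀ k : ℕ, r k ≠ 0 →
      r (k + 1) = r k - ((r k ⬝ᵥ r k) / (p k ⬝ᵥ A.mulVec (p k))) • A.mulVec (p k))
    (hprec : ∀ k : ℕ, r k ≠ 0 →
      p (k + 1) = r (k + 1) + ((r (k + 1) ⬝ᵥ r (k + 1)) / (r k ⬝ᵥ r k)) • p k) :
    ∀ k : ℕ, 1 ≤ k → (∀ i < k, r i ≠ 0) →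
      (∃ s ∈ Submodule.span ℝ (Set.range fun i : Fin k => (A ^ (i : ℕ)).mulVec (r 0)),
        x k = x 0 + s) ∧
      (∀ s ∈ Submodule.span ℝ (Set.range fun i : Fin k => (A ^ (i : ℕ)).mulVec (r 0)),
        x 0 + s ≠ x k → f (x k) < f (x 0 + s)) := by
  intro k _ hk
  obtain rfl : f = energy A b := funext hf
  have cg : IsCGSequence A b x r p := ⟨hr0, hp0, hxrec, hrrec, hprec⟩
  have hx : x k - x 0 ∈ krylov A (r 0) k := cg.iterate_sub_mem_krylov hk
  refine ⟨⟨x k - x 0, hx, by abel⟩, fun s hs hne => ?_⟩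
  have hd : x 0 + s - x k ∈ krylov A (r 0) k := by
    rw [show x 0 + s - x k = s - (x k - x 0) by abel]
    exact sub_mem hs hx
  rw [show x 0 + s = x k + (x 0 + s - x k) by abel]
  refine energy_lt_energy_add hA (sub_ne_zero.2 hne) ?_
  rw [← cg.residual_eq hk, dotProduct_comm]
  exact cg.residual_orthogonal_krylov hA hk hd
end
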